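/- arXiv:2502.15748 — 4 statements merged into one kernel-verified Lean document; each statement's English description precedes it below -/
import Mathlib

section
/- Let R be a commutative Krasner hyperring with unit and I a hyperideal. Then the canonical map π̄ : Spec(R/I) → Spec(R) induced by the projection π : R → R/I is injective with image V(I), and Spec(R/I) is homeomorphic to V(I) with the subspace topology. -/
universe u

/-- A commutative Krasner hyperring with unit: `(R,+)` is a canonical hypergroup
(multivalued addition), `(R,·)` is a commutative monoid, `·` distributes over `+`
and `0` is absorbing. -/
structure KHR (R : Type u) where
  hadd : R → R → Set R
  mul : R → R → R
  zero : R
  one : R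
  neg : R → R
  hadd_comm : ∀ a b, hadd a b = hadd b a
  hadd_assoc : ∀ a b c, (⋃ x ∈ hadd a b, hadd x c) = ⋃ y ∈ hadd b c, hadd a y
  zero_hadd : ∀ a, hadd zero a = {a}
  neg_mem : ∀ a, zero ∈ hadd a (neg a)
  neg_unique : ∀ a b, zero ∈ hadd a b → b = neg a
  reversible : ∀ a b c, c ∈ hadd a b → b ∈ hadd (neg a) c
  mul_assoc : ∀ a b c, mul (mul a b) c = mul a (mul b c)
  mul_comm : ∀ a b, mul a b = mul b a
  one_mul : ∀ a, mul one a = a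
  zero_mul : ∀ a, mul zero a = zero
  distrib : ∀ a b c, (fun x => mul a x) '' hadd b c = hadd (mul a b) (mul a c)

namespace KHR

variable {R : Type u} {S : Type u} {T : Type u} {Q : Type u}

/-- Sum of two subsets: `A + B = ⋃ {a + b : a ∈ A, b ∈ B}`. -/
def sumSet (H : KHR R) (A B : Set R) : Set R := ⋃ a ∈ A, ⋃ b ∈ B, H.hadd a b

/-- The coset `x + I`. -/
def coset (H : KHR R) (x : R) (I : Set R) : Set R := H.sumSet {x} I

/-- Hyperideal of a Krasner hyperring. -/
def IsHyperideal (H : KHR R) (I : Set R) : Prop :=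
  H.zero ∈ I ∧ (∀ a ∈ I, ∀ b ∈ I, H.hadd a b ⊆ I) ∧ (∀ a ∈ I, H.neg a ∈ I) ∧
    ∀ r : R, ∀ a ∈ I, H.mul r a ∈ I

/-- Prime hyperideal. -/
def IsPrime (H : KHR R) (P : Set R) : Prop :=
  H.IsHyperideal P ∧ P ≠ Set.univ ∧ ∀ a b : R, H.mul a b ∈ P → a ∈ P ∨ b ∈ P

/-- Maximal hyperideal. -/
def IsMaximal (H : KHR R) (M : Set R) : Prop :=
  H.IsHyperideal M ∧ M ≠ Set.univ ∧ ∀ J : Set R, H.IsHyperideal J → M ⊂ J → J = Set.univ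

/-- The prime spectrum. -/
def Spectrum (H : KHR R) : Type u := {P : Set R // H.IsPrime P}

/-- The Zariski-closed set attached to a set of elements. -/
def V (H : KHR R) (s : Set R) : Set H.Spectrum := {P | s ⊆ P.1}

/-- The basic Zariski-open set attached to an element. -/
def W (H : KHR R) (x : R) : Set H.Spectrum := {P | x ∉ P.1}

/-- The hyperideal generated by a set. -/
def genIdeal (H : KHR R) (s : Set R) : Set R := ⋂₀ {I | H.IsHyperideal I ∧ s ⊆ I}

/-- The product `IJ` of two hyperideals. -/
def mulIdeal (H : KHR R) (I J : Set R) : Set R :=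
  H.genIdeal {x | ∃ a ∈ I, ∃ b ∈ J, x = H.mul a b}

/-- The Zariski topology on the prime spectrum. -/
def zariski (H : KHR R) : TopologicalSpace H.Spectrum :=
  TopologicalSpace.generateFrom {U | ∃ I : Set R, H.IsHyperideal I ∧ U = (H.V I)ᶜ}

/-- Powers of an element. -/
def pow (H : KHR R) (x : R) : ℕ → R
  | 0 => H.one
  | n+1 => H.mul x (H.pow x n)

/-- The nilradical. -/
def nil (H : KHR R) : Set R := {x | ∃ n : ℕ, H.pow x (n+1) = H.zero}

/-- The radical of a hyperideal. -/
def radical (H : KHR R) (I : Set R) : Set R := {x | ∃ n : ℕ, H.pow x (n+1) ∈ I}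

/-- Units. -/
def IsUnit (H : KHR R) (x : R) : Prop := ∃ y, H.mul x y = H.one

/-- Good homomorphism of Krasner hyperrings. -/
structure GoodHom (H : KHR R) (K : KHR S) where
  toFun : R → S
  map_hadd : ∀ a b, toFun '' H.hadd a b = K.hadd (toFun a) (toFun b)
  map_mul : ∀ a b, toFun (H.mul a b) = K.mul (toFun a) (toFun b)
  map_zero : toFun H.zero = K.zero
  map_one : toFun H.one = K.one

theorem comap_prime (H : KHR R) (K : KHR S) (f : GoodHom H K) {P : Set S}
    (hP : K.IsPrime P) : H.IsPrime (f.toFun ⁻¹' P) := by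
  obtain ⟨⟨h0, haddc, hneg, hmulc⟩, hne, hpr⟩ := hP
  refine ⟨⟨?_, ?_, ?_, ?_⟩, ?_, ?_⟩
  · show f.toFun H.zero ∈ P
    rw [f.map_zero]; exact h0
  · intro a ha b hb c hc
    have : f.toFun c ∈ K.hadd (f.toFun a) (f.toFun b) := by
      rw [← f.map_hadd]; exact ⟨c, hc, rfl⟩
    exact haddc _ ha _ hb this
  · intro a ha
    have hz : K.zero ∈ K.hadd (f.toFun a) (f.toFun (H.neg a)) := by
      rw [← f.map_hadd, ← f.map_zero]
      exact ⟨H.zero, H.neg_mem a, rfl⟩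
    have : f.toFun (H.neg a) = K.neg (f.toFun a) := K.neg_unique _ _ hz
    show f.toFun (H.neg a) ∈ P
    rw [this]; exact hneg _ ha
  · intro r a ha
    show f.toFun (H.mul r a) ∈ P
    rw [f.map_mul]; exact hmulc _ _ ha
  · intro hU
    apply hne
    ext s
    simp only [Set.mem_univ, iff_true]
    have h1 : f.toFun H.one ∈ P := by
      have : H.one ∈ f.toFun ⁻¹' P := by rw [hU]; trivial
      exact this
    have : K.mul s (f.toFun H.one) ∈ P := hmulc s _ h1
    rwa [f.map_one, K.mul_comm, K.one_mul] at this
  · intro a b hab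
    have : K.mul (f.toFun a) (f.toFun b) ∈ P := by rw [← f.map_mul]; exact hab
    exact hpr _ _ this

/-- The induced map on spectra. -/
def specMap (H : KHR R) (K : KHR S) (f : GoodHom H K) : K.Spectrum → H.Spectrum :=
  fun P => ⟨f.toFun ⁻¹' P.1, comap_prime H K f P.2⟩

/-- `K` is the quotient hyperring of `H` by the hyperideal `I`, witnessed by the
canonical projection. -/
structure IsQuotient (H : KHR R) (K : KHR Q) (I : Set R) where
  hom : GoodHom H K
  surj : Function.Surjective hom.toFun
  fiber : ∀ x y, hom.toFun x = hom.toFun y ↔ H.coset x I = H.coset y I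

/-- Strongly regular (equivalence) relation on a Krasner hyperring. -/
def StronglyRegular (H : KHR R) (ρ : R → R → Prop) : Prop :=
  Equivalence ρ ∧ ∀ a b c d, ρ a b → ρ c d →
    (∀ x ∈ H.hadd a c, ∀ y ∈ H.hadd b d, ρ x y) ∧ ρ (H.mul a c) (H.mul b d)

/-- The fundamental relation `γ*`: the smallest strongly regular relation. -/
def gamma (H : KHR R) : R → R → Prop := fun x y => ∀ ρ, H.StronglyRegular ρ → ρ x y

/-- The zero class `γ*(0)` of the fundamental relation. -/
def gammaZero (H : KHR R) : Set R := {x | H.gamma x H.zero}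



/-- The product of two Krasner hyperrings, with componentwise hyperoperations. -/
def prodKHR (H : KHR R) (K : KHR S) : KHR (R × S) where
  hadd a b := H.hadd a.1 b.1 ×ˢ K.hadd a.2 b.2
  mul a b := (H.mul a.1 b.1, K.mul a.2 b.2)
  zero := (H.zero, K.zero)
  one := (H.one, K.one)
  neg a := (H.neg a.1, K.neg a.2)
  hadd_comm a b := by beta_reduce; rw [H.hadd_comm, K.hadd_comm]
  hadd_assoc a b c := by
    beta_reduce
    have h1 := H.hadd_assoc a.1 b.1 c.1
    have h2 := K.hadd_assoc a.2 b.2 c.2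
    ext ⟨p, q⟩
    have e1 : p ∈ (⋃ x ∈ H.hadd a.1 b.1, H.hadd x c.1) ↔
        p ∈ ⋃ y ∈ H.hadd b.1 c.1, H.hadd a.1 y := by rw [h1]
    have e2 : q ∈ (⋃ x ∈ K.hadd a.2 b.2, K.hadd x c.2) ↔
        q ∈ ⋃ y ∈ K.hadd b.2 c.2, K.hadd a.2 y := by rw [h2]
    simp only [Set.mem_iUnion, Set.mem_prod] at e1 e2 ⊢
    constructor
    · rintro ⟨⟨x1, x2⟩, ⟨⟨hx1, hx2⟩, hp, hq⟩⟩
      obtain ⟨y1, hy1, hp'⟩ := e1.1 ⟨x1, hx1, hp⟩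
      obtain ⟨y2, hy2, hq'⟩ := e2.1 ⟨x2, hx2, hq⟩
      exact ⟨(y1, y2), ⟨hy1, hy2⟩, hp', hq'⟩
    · rintro ⟨⟨y1, y2⟩, ⟨⟨hy1, hy2⟩, hp, hq⟩⟩
      obtain ⟨x1, hx1, hp'⟩ := e1.2 ⟨y1, hy1, hp⟩
      obtain ⟨x2, hx2, hq'⟩ := e2.2 ⟨y2, hy2, hq⟩
      exact ⟨(x1, x2), ⟨hx1, hx2⟩, hp', hq'⟩
  zero_hadd a := by
    beta_reduce
    rw [H.zero_hadd, K.zero_hadd, Set.singleton_prod_singleton]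
  neg_mem a := ⟨H.neg_mem a.1, K.neg_mem a.2⟩
  neg_unique a b h := Prod.ext (H.neg_unique _ _ h.1) (K.neg_unique _ _ h.2)
  reversible a b c h := ⟨H.reversible _ _ _ h.1, K.reversible _ _ _ h.2⟩
  mul_assoc a b c := Prod.ext (H.mul_assoc _ _ _) (K.mul_assoc _ _ _)
  mul_comm a b := Prod.ext (H.mul_comm _ _) (K.mul_comm _ _)
  one_mul a := Prod.ext (H.one_mul _) (K.one_mul _)
  zero_mul a := Prod.ext (H.zero_mul _) (K.zero_mul _)
  distrib a b c := by
    ext ⟨p, q⟩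
    simp only [Set.mem_image, Set.mem_prod]
    constructor
    · rintro ⟨⟨x, y⟩, ⟨hx, hy⟩, h⟩
      obtain ⟨h1, h2⟩ := Prod.mk.injEq .. ▸ h
      constructor
      · rw [← H.distrib]; exact ⟨x, hx, h1⟩
      · rw [← K.distrib]; exact ⟨y, hy, h2⟩
    · rintro ⟨hp, hq⟩
      rw [← H.distrib] at hp
      rw [← K.distrib] at hq
      obtain ⟨x, hx, hx'⟩ := hp
      obtain ⟨y, hy, hy'⟩ := hq
      exact ⟨(x, y), ⟨hx, hy⟩, by simp [hx', hy']⟩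


end KHR

/-!
The projection `π : R → R/I` is surjective, so `P ↦ π⁻¹ P` is injective on prime hyperideals.
A prime `P ⊇ I` is a union of cosets of `I`, hence saturated: `π⁻¹ (π P) = P`, and `π P` is prime,
so `P ↦ π P` inverts `π̄` on `V(I)`. Both maps pull the basic closed sets `V(J)` back to
basic closed sets, `π̄⁻¹ V(J) = V(⟨π J⟩)` and `(π ·)⁻¹ V(J) = V(π⁻¹ J) ∩ V(I)`, so both are
continuous.
-/

namespace KHR

variable {R S : Type u}

section Hyperring

variable (H : KHR R)

theorem neg_neg (a : R) : H.neg (H.neg a) = a :=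
  (H.neg_unique (H.neg a) a (by rw [H.hadd_comm]; exact H.neg_mem a)).symm

theorem hadd_nonempty (a b : R) : (H.hadd a b).Nonempty := by
  have hb : b ∈ ⋃ x ∈ H.hadd (H.neg a) a, H.hadd x b := by
    refine Set.mem_biUnion (x := H.zero) ?_ ?_
    · rw [H.hadd_comm]; exact H.neg_mem a
    · rw [H.zero_hadd]; rfl
  rw [H.hadd_assoc] at hb
  obtain ⟨y, hy, -⟩ := Set.mem_iUnion₂.1 hb
  exact ⟨y, hy⟩

variable {H}

theorem mem_coset {x y : R} {I : Set R} : x ∈ H.coset y I ↔ ∃ i ∈ I, x ∈ H.hadd y i := by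
  simp [coset, sumSet]

theorem mem_coset_self {I : Set R} (h0 : H.zero ∈ I) (x : R) : x ∈ H.coset x I :=
  mem_coset.2 ⟨H.zero, h0, by rw [H.hadd_comm, H.zero_hadd]; rfl⟩

theorem coset_zero (I : Set R) : H.coset H.zero I = I := by
  ext x
  simp only [mem_coset, H.zero_hadd, Set.mem_singleton_iff, exists_eq_right']

theorem coset_eq_of_mem {I : Set R} (hI : H.IsHyperideal I) {x : R} (hx : x ∈ I) :
    H.coset x I = I := by
  ext z
  rw [mem_coset]
  constructor
  · rintro ⟨i, hi, hz⟩
    exact hI.2.1 x hx i hi hz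
  · intro hz
    obtain ⟨b, hb⟩ := H.hadd_nonempty (H.neg x) z
    refine ⟨b, hI.2.1 _ (hI.2.2.1 x hx) _ hz hb, ?_⟩
    simpa only [H.neg_neg] using H.reversible (H.neg x) z b hb

theorem isHyperideal_genIdeal (s : Set R) : H.IsHyperideal (H.genIdeal s) := by
  refine ⟨?_, ?_, ?_, ?_⟩
  · exact Set.mem_sInter.2 fun _ hJ => hJ.1.1
  · intro a ha b hb c hc
    exact Set.mem_sInter.2 fun J hJ =>
      hJ.1.2.1 a (Set.mem_sInter.1 ha J hJ) b (Set.mem_sInter.1 hb J hJ) hc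
  · intro a ha
    exact Set.mem_sInter.2 fun J hJ => hJ.1.2.2.1 a (Set.mem_sInter.1 ha J hJ)
  · intro r a ha
    exact Set.mem_sInter.2 fun J hJ => hJ.1.2.2.2 r a (Set.mem_sInter.1 ha J hJ)

theorem genIdeal_subset_iff {s P : Set R} (hP : H.IsHyperideal P) :
    H.genIdeal s ⊆ P ↔ s ⊆ P :=
  ⟨fun h _ hx => h (Set.mem_sInter.2 fun _ hJ => hJ.2 hx),
    fun h => Set.sInter_subset_of_mem ⟨hP, h⟩⟩

end Hyperring

namespace GoodHom

variable {H : KHR R} {K : KHR S} (f : GoodHom H K)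

theorem map_neg (a : R) : f.toFun (H.neg a) = K.neg (f.toFun a) :=
  K.neg_unique _ _ <| by
    rw [← f.map_hadd, ← f.map_zero]
    exact ⟨H.zero, H.neg_mem a, rfl⟩

theorem isHyperideal_preimage {J : Set S} (hJ : K.IsHyperideal J) :
    H.IsHyperideal (f.toFun ⁻¹' J) := by
  obtain ⟨h0, hadd, hneg, hmul⟩ := hJ
  refine ⟨?_, ?_, ?_, ?_⟩
  · show f.toFun H.zero ∈ J
    rw [f.map_zero]; exact h0
  · intro a ha b hb c hc
    exact hadd _ ha _ hb (f.map_hadd a b ▸ Set.mem_image_of_mem f.toFun hc)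
  · intro a ha
    show f.toFun (H.neg a) ∈ J
    rw [f.map_neg]; exact hneg _ ha
  · intro r a ha
    show f.toFun (H.mul r a) ∈ J
    rw [f.map_mul]; exact hmul _ _ ha

theorem specMap_injective (hf : Function.Surjective f.toFun) :
    Function.Injective (specMap H K f) := fun P₁ P₂ h => by
  apply Subtype.ext
  rw [← Set.image_preimage_eq P₁.1 hf, ← Set.image_preimage_eq P₂.1 hf]
  exact congrArg (f.toFun '' ·) (congrArg Subtype.val h)

end GoodHom

namespace IsQuotient

variable {H : KHR R} {K : KHR S} {I : Set R} (q : IsQuotient H K I)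

theorem exists_mem_hadd_of_eq (hI : H.IsHyperideal I) {x y : R} (h : q.hom.toFun x = q.hom.toFun y) :
    ∃ i ∈ I, x ∈ H.hadd y i :=
  mem_coset.1 ((q.fiber x y).1 h ▸ mem_coset_self hI.1 x)

theorem map_eq_zero_of_mem (hI : H.IsHyperideal I) {x : R} (hx : x ∈ I) : q.hom.toFun x = K.zero := by
  rw [← q.hom.map_zero]
  exact (q.fiber x H.zero).2 (by rw [coset_eq_of_mem hI hx, coset_zero])

variable {P : Set R}

theorem preimage_image (hI : H.IsHyperideal I) (hIP : I ⊆ P) (hP : H.IsHyperideal P) :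
    q.hom.toFun ⁻¹' (q.hom.toFun '' P) = P := by
  refine Set.Subset.antisymm ?_ (Set.subset_preimage_image _ _)
  rintro x ⟨y, hy, hxy⟩
  obtain ⟨i, hi, hx⟩ := q.exists_mem_hadd_of_eq hI hxy.symm
  exact hP.2.1 y hy i (hIP hi) hx

theorem subset_image_iff (hI : H.IsHyperideal I) (hIP : I ⊆ P) (hP : H.IsHyperideal P)
    (J : Set S) : J ⊆ q.hom.toFun '' P ↔ q.hom.toFun ⁻¹' J ⊆ P := by
  constructor
  · intro h
    rw [← q.preimage_image hI hIP hP]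
    exact Set.preimage_mono h
  · intro h
    rw [← Set.image_preimage_eq J q.surj]
    exact Set.image_mono h

theorem isPrime_image (hI : H.IsHyperideal I) (hIP : I ⊆ P) (hP : H.IsPrime P) :
    K.IsPrime (q.hom.toFun '' P) := by
  obtain ⟨hPideal, hne, hpr⟩ := hP
  have hsat := q.preimage_image hI hIP hPideal
  obtain ⟨h0, hadd, hneg, hmul⟩ := hPideal
  refine ⟨⟨⟨H.zero, h0, q.hom.map_zero⟩, ?_, ?_, ?_⟩, ?_, ?_⟩
  · rintro _ ⟨a, ha, rfl⟩ _ ⟨b, hb, rfl⟩ c hc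
    rw [← q.hom.map_hadd] at hc
    obtain ⟨x, hx, rfl⟩ := hc
    exact ⟨x, hadd _ ha _ hb hx, rfl⟩
  · rintro _ ⟨a, ha, rfl⟩
    exact ⟨H.neg a, hneg _ ha, q.hom.map_neg a⟩
  · rintro r _ ⟨a, ha, rfl⟩
    obtain ⟨s, rfl⟩ := q.surj r
    exact ⟨H.mul s a, hmul _ _ ha, q.hom.map_mul s a⟩
  · intro hU
    have hone : H.one ∈ P := by
      rw [← hsat, Set.mem_preimage, q.hom.map_one, hU]
      trivial
    refine hne (Set.eq_univ_of_forall fun r => ?_)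
    simpa only [H.mul_comm r, H.one_mul] using hmul r _ hone
  · intro u v huv
    obtain ⟨a, rfl⟩ := q.surj u
    obtain ⟨b, rfl⟩ := q.surj v
    rw [← q.hom.map_mul, ← Set.mem_preimage, hsat] at huv
    exact (hpr a b huv).imp (Set.mem_image_of_mem _) (Set.mem_image_of_mem _)

end IsQuotient

section Zariski

attribute [local instance] zariski

theorem isOpen_compl_V {H : KHR R} {J : Set R} (hJ : H.IsHyperideal J) : IsOpen (H.V J)ᶜ :=
  TopologicalSpace.isOpen_generateFrom_of_mem ⟨J, hJ, rfl⟩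

theorem continuous_to_spectrum {X : Type*} [TopologicalSpace X] {H : KHR R}
    {g : X → H.Spectrum} (h : ∀ J, H.IsHyperideal J → IsOpen (g ⁻¹' (H.V J)ᶜ)) :
    Continuous g :=
  continuous_generateFrom_iff.2 fun _ ⟨J, hJ, hU⟩ => hU ▸ h J hJ

theorem GoodHom.preimage_specMap_V {H : KHR R} {K : KHR S} (f : GoodHom H K) (J : Set R) :
    specMap H K f ⁻¹' H.V J = K.V (K.genIdeal (f.toFun '' J)) := by
  ext P
  exact (Set.image_subset_iff.symm.trans (genIdeal_subset_iff P.2.1).symm)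

theorem GoodHom.continuous_specMap {H : KHR R} {K : KHR S} (f : GoodHom H K) :
    Continuous (specMap H K f) :=
  continuous_to_spectrum fun J _ => by
    rw [Set.preimage_compl, f.preimage_specMap_V]
    exact isOpen_compl_V (isHyperideal_genIdeal _)

namespace IsQuotient

variable {H : KHR R} {K : KHR S} {I : Set R} (q : IsQuotient H K I)

theorem specMap_mem_V (hI : H.IsHyperideal I) (P : K.Spectrum) : specMap H K q.hom P ∈ H.V I :=
  fun i hi => show q.hom.toFun i ∈ P.1 from (q.map_eq_zero_of_mem hI hi) ▸ P.2.1.1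

def primeImage (hI : H.IsHyperideal I) (P : H.V I) : K.Spectrum :=
  ⟨q.hom.toFun '' P.1.1, q.isPrime_image hI P.2 P.1.2⟩

theorem specMap_primeImage (hI : H.IsHyperideal I) (P : H.V I) :
    specMap H K q.hom (q.primeImage hI P) = P.1 :=
  Subtype.ext (q.preimage_image hI P.2 P.1.2.1)

theorem primeImage_specMap (hI : H.IsHyperideal I) (P : K.Spectrum) :
    q.primeImage hI ⟨specMap H K q.hom P, q.specMap_mem_V hI P⟩ = P :=
  Subtype.ext (Set.image_preimage_eq _ q.surj)

theorem range_specMap (hI : H.IsHyperideal I) : Set.range (specMap H K q.hom) = H.V I :=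
  Set.Subset.antisymm (Set.range_subset_iff.2 (q.specMap_mem_V hI))
    fun P hP => ⟨_, q.specMap_primeImage hI ⟨P, hP⟩⟩

theorem continuous_primeImage (hI : H.IsHyperideal I) : Continuous (q.primeImage hI) :=
  continuous_to_spectrum fun J hJ => by
    have hpre : q.primeImage hI ⁻¹' (K.V J)ᶜ = Subtype.val ⁻¹' (H.V (q.hom.toFun ⁻¹' J))ᶜ := by
      ext P
      exact not_congr (q.subset_image_iff hI P.2 P.1.2.1 J)
    rw [hpre]
    exact (isOpen_compl_V (q.hom.isHyperideal_preimage hJ)).preimage continuous_subtype_val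

def specHomeomorph (hI : H.IsHyperideal I) : K.Spectrum ≃ₜ H.V I where
  toFun := Set.codRestrict (specMap H K q.hom) (H.V I) (q.specMap_mem_V hI)
  invFun := q.primeImage hI
  left_inv := q.primeImage_specMap hI
  right_inv P := Subtype.ext (q.specMap_primeImage hI P)
  continuous_toFun := q.hom.continuous_specMap.codRestrict _
  continuous_invFun := q.continuous_primeImage hI

end IsQuotient

end Zariski

end KHR

/-- For a hyperideal `I` of a commutative Krasner hyperring `R` with unit,
the map `π̄ : Spec(R/I) → Spec(R)` induced by the projection is injective with image
`V(I)`, and `Spec(R/I)` is homeomorphic to `V(I)` with the subspace Zariski topology,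
via (the corestriction of) `π̄`. -/
theorem stmt5 {R Q : Type u} (H : KHR R) (K : KHR Q) (I : Set R)
    (hI : H.IsHyperideal I) (q : KHR.IsQuotient H K I) :
    Function.Injective (KHR.specMap H K q.hom) ∧
    Set.range (KHR.specMap H K q.hom) = H.V I ∧
    ∃ e : @Homeomorph K.Spectrum (↥(H.V I)) K.zariski
        (TopologicalSpace.induced Subtype.val H.zariski),
      ∀ P : K.Spectrum, ((e P : ↥(H.V I)) : H.Spectrum) = KHR.specMap H K q.hom P :=
  ⟨q.hom.specMap_injective q.surj, q.range_specMap hI, q.specHomeomorph hI, fun _ => rfl⟩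
end

section
/- For commutative Krasner hyperrings R₁ and R₂ with unit, Spec(R₁ × R₂) is the disjoint union of Spec(R₁) and Spec(R₂): every prime hyperideal of R₁ × R₂ is either P₁ × R₂ with P₁ ∈ Spec(R₁) or R₁ × P₂ with P₂ ∈ Spec(R₂). -/
universe u

/-- `Spec(R₁ × R₂)` is the disjoint union of `Spec R₁` and `Spec R₂`:
every prime hyperideal of `R₁ × R₂` is either `P₁ × R₂` with `P₁` prime in `R₁`,
or `R₁ × P₂` with `P₂` prime in `R₂`. -/
theorem stmt7 {R S : Type u} (H : KHR R) (K : KHR S) (P : Set (R × S)) :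
    (KHR.prodKHR H K).IsPrime P ↔
      ((∃ P₁ : Set R, H.IsPrime P₁ ∧ P = P₁ ×ˢ (Set.univ : Set S)) ∨
       (∃ P₂ : Set S, K.IsPrime P₂ ∧ P = (Set.univ : Set R) ×ˢ P₂)) := by
  have haddz : ∀ (a : R), H.hadd a H.zero = {a} := fun a => by
    rw [H.hadd_comm, H.zero_hadd]
  have kaddz : ∀ (a : S), K.hadd a K.zero = {a} := fun a => by
    rw [K.hadd_comm, K.zero_hadd]
  have hnegz : H.neg H.zero = H.zero :=
    (H.neg_unique H.zero H.zero (by rw [H.zero_hadd]; rfl)).symm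
  have knegz : K.neg K.zero = K.zero :=
    (K.neg_unique K.zero K.zero (by rw [K.zero_hadd]; rfl)).symm
  constructor
  · rintro ⟨⟨h0, haddc, hneg, hmulc⟩, hne, hpr⟩
    have hsplit : ((H.one, K.zero) : R × S) ∈ P ∨ ((H.zero, K.one) : R × S) ∈ P := by
      apply hpr
      show ((H.mul H.one H.zero, K.mul K.zero K.one) : R × S) ∈ P
      rw [H.one_mul, K.zero_mul]
      exact h0
    rcases hsplit with he | he
    · -- (1,0) ∈ P, so P = univ ×ˢ P₂
      right
      set P₂ : Set S := {s | ((H.zero, s) : R × S) ∈ P} with hP₂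
      have mem_iff : ∀ (r : R) (s : S), (r, s) ∈ P ↔ s ∈ P₂ := by
        intro r s
        constructor
        · intro h
          have := hmulc (H.zero, K.one) _ h
          show ((H.zero, s) : R × S) ∈ P
          have e : ((H.mul H.zero r, K.mul K.one s) : R × S) = (H.zero, s) := by
            rw [H.zero_mul, K.one_mul]
          rw [← e]; exact this
        · intro hs
          have hr0 : ((r, K.zero) : R × S) ∈ P := by
            have := hmulc (r, K.zero) _ he
            have e : ((H.mul r H.one, K.mul K.zero K.zero) : R × S) = (r, K.zero) := by
              rw [H.mul_comm, H.one_mul, K.zero_mul]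
            rw [← e]; exact this
          have := haddc _ hr0 _ hs
          apply this
          show ((r, s) : R × S) ∈ H.hadd r H.zero ×ˢ K.hadd K.zero s
          rw [haddz, K.zero_hadd]
          exact ⟨rfl, rfl⟩
      refine ⟨P₂, ⟨⟨?_, ?_, ?_, ?_⟩, ?_, ?_⟩, ?_⟩
      · exact h0
      · intro a ha b hb c hc
        have := haddc _ ha _ hb
        have hm : ((H.zero, c) : R × S) ∈ H.hadd H.zero H.zero ×ˢ K.hadd a b := by
          rw [H.zero_hadd]; exact ⟨rfl, hc⟩
        exact this hm
      · intro a ha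
        have := hneg _ ha
        show ((H.zero, K.neg a) : R × S) ∈ P
        have e : ((H.neg H.zero, K.neg a) : R × S) = (H.zero, K.neg a) := by rw [hnegz]
        rw [← e]; exact this
      · intro r a ha
        have := hmulc (H.zero, r) _ ha
        show ((H.zero, K.mul r a) : R × S) ∈ P
        have e : ((H.mul H.zero H.zero, K.mul r a) : R × S) = (H.zero, K.mul r a) := by
          rw [H.zero_mul]
        rw [← e]; exact this
      · intro hu
        apply hne
        ext ⟨r, s⟩
        simp only [Set.mem_univ, iff_true]
        rw [mem_iff]
        rw [hu]; trivial
      · intro a b hab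
        have h1 : ((H.one, K.mul a b) : R × S) ∈ P := (mem_iff _ _).2 hab
        have e : ((H.mul H.one H.one, K.mul a b) : R × S) = (H.one, K.mul a b) := by
          rw [H.one_mul]
        rcases hpr (H.one, a) (H.one, b) (by rw [show (KHR.prodKHR H K).mul (H.one, a) (H.one, b) = ((H.mul H.one H.one, K.mul a b) : R × S) from rfl, e]; exact h1) with h | h
        · exact Or.inl ((mem_iff _ _).1 h)
        · exact Or.inr ((mem_iff _ _).1 h)
      · ext ⟨r, s⟩
        rw [Set.mem_prod]
        simp only [Set.mem_univ, true_and]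
        exact mem_iff r s
    · -- (0,1) ∈ P, so P = P₁ ×ˢ univ
      left
      set P₁ : Set R := {r | ((r, K.zero) : R × S) ∈ P} with hP₁
      have mem_iff : ∀ (r : R) (s : S), (r, s) ∈ P ↔ r ∈ P₁ := by
        intro r s
        constructor
        · intro h
          have := hmulc (H.one, K.zero) _ h
          show ((r, K.zero) : R × S) ∈ P
          have e : ((H.mul H.one r, K.mul K.zero s) : R × S) = (r, K.zero) := by
            rw [H.one_mul, K.zero_mul]
          rw [← e]; exact this
        · intro hr
          have hs0 : ((H.zero, s) : R × S) ∈ P := by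
            have := hmulc (H.zero, s) _ he
            have e : ((H.mul H.zero H.zero, K.mul s K.one) : R × S) = (H.zero, s) := by
              rw [H.zero_mul, K.mul_comm, K.one_mul]
            rw [← e]; exact this
          have := haddc _ hr _ hs0
          apply this
          show ((r, s) : R × S) ∈ H.hadd r H.zero ×ˢ K.hadd K.zero s
          rw [haddz, K.zero_hadd]
          exact ⟨rfl, rfl⟩
      refine ⟨P₁, ⟨⟨?_, ?_, ?_, ?_⟩, ?_, ?_⟩, ?_⟩
      · exact h0
      · intro a ha b hb c hc
        have := haddc _ ha _ hb
        have hm : ((c, K.zero) : R × S) ∈ H.hadd a b ×ˢ K.hadd K.zero K.zero := by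
          rw [K.zero_hadd]; exact ⟨hc, rfl⟩
        exact this hm
      · intro a ha
        have := hneg _ ha
        show ((H.neg a, K.zero) : R × S) ∈ P
        have e : ((H.neg a, K.neg K.zero) : R × S) = (H.neg a, K.zero) := by rw [knegz]
        rw [← e]; exact this
      · intro r a ha
        have := hmulc (r, K.zero) _ ha
        show ((H.mul r a, K.zero) : R × S) ∈ P
        have e : ((H.mul r a, K.mul K.zero K.zero) : R × S) = (H.mul r a, K.zero) := by
          rw [K.zero_mul]
        rw [← e]; exact this
      · intro hu
        apply hne
        ext ⟨r, s⟩
        simp only [Set.mem_univ, iff_true]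
        rw [mem_iff]
        rw [hu]; trivial
      · intro a b hab
        have h1 : ((H.mul a b, K.one) : R × S) ∈ P := (mem_iff _ _).2 hab
        have e : ((H.mul a b, K.mul K.one K.one) : R × S) = (H.mul a b, K.one) := by
          rw [K.one_mul]
        rcases hpr (a, K.one) (b, K.one) (by rw [show (KHR.prodKHR H K).mul (a, K.one) (b, K.one) = ((H.mul a b, K.mul K.one K.one) : R × S) from rfl, e]; exact h1) with h | h
        · exact Or.inl ((mem_iff _ _).1 h)
        · exact Or.inr ((mem_iff _ _).1 h)
      · ext ⟨r, s⟩
        rw [Set.mem_prod]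
        simp only [Set.mem_univ, and_true]
        exact mem_iff r s
  · rintro (⟨P₁, ⟨⟨h0, haddc, hneg, hmulc⟩, hne, hpr⟩, rfl⟩ |
            ⟨P₂, ⟨⟨h0, haddc, hneg, hmulc⟩, hne, hpr⟩, rfl⟩)
    · refine ⟨⟨⟨h0, trivial⟩, ?_, ?_, ?_⟩, ?_, ?_⟩
      · rintro ⟨a1, a2⟩ ha ⟨b1, b2⟩ hb ⟨c1, c2⟩ hc
        exact ⟨haddc _ ha.1 _ hb.1 hc.1, trivial⟩
      · rintro ⟨a1, a2⟩ ha
        exact ⟨hneg _ ha.1, trivial⟩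
      · rintro ⟨r1, r2⟩ ⟨a1, a2⟩ ha
        exact ⟨hmulc _ _ ha.1, trivial⟩
      · intro hu
        obtain ⟨a, ha⟩ := Set.ne_univ_iff_exists_notMem _ |>.1 hne
        have : ((a, K.zero) : R × S) ∈ P₁ ×ˢ (Set.univ : Set S) := by rw [hu]; trivial
        exact ha this.1
      · rintro ⟨a1, a2⟩ ⟨b1, b2⟩ hab
        rcases hpr a1 b1 hab.1 with h | h
        · exact Or.inl ⟨h, trivial⟩
        · exact Or.inr ⟨h, trivial⟩
    · refine ⟨⟨⟨trivial, h0⟩, ?_, ?_, ?_⟩, ?_, ?_⟩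
      · rintro ⟨a1, a2⟩ ha ⟨b1, b2⟩ hb ⟨c1, c2⟩ hc
        exact ⟨trivial, haddc _ ha.2 _ hb.2 hc.2⟩
      · rintro ⟨a1, a2⟩ ha
        exact ⟨trivial, hneg _ ha.2⟩
      · rintro ⟨r1, r2⟩ ⟨a1, a2⟩ ha
        exact ⟨trivial, hmulc _ _ ha.2⟩
      · intro hu
        obtain ⟨a, ha⟩ := Set.ne_univ_iff_exists_notMem _ |>.1 hne
        have : ((H.zero, a) : R × S) ∈ (Set.univ : Set R) ×ˢ P₂ := by rw [hu]; trivial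
        exact ha this.2
      · rintro ⟨a1, a2⟩ ⟨b1, b2⟩ hab
        rcases hpr a2 b2 hab.2 with h | h
        · exact Or.inl ⟨trivial, h⟩
        · exact Or.inr ⟨trivial, h⟩
end

section
/- For a commutative Krasner hyperring R with unit, the sets W(f) = {P ∈ Spec(R) : f ∉ P}, for f ∈ R, form a basis of the Zariski topology on Spec(R), and W(f) ∩ W(g) = W(fg); moreover W(f) = ∅ iff f is nilpotent, and W(f) = Spec(R) iff f is a unit. -/
universe u

namespace KHR

variable {R : Type u} (H : KHR R)

lemma mul_zero' (a : R) : H.mul a H.zero = H.zero := by rw [H.mul_comm, H.zero_mul]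

lemma mul_one' (a : R) : H.mul a H.one = a := by rw [H.mul_comm, H.one_mul]

lemma hadd_zero' (a : R) : H.hadd a H.zero = {a} := by rw [H.hadd_comm, H.zero_hadd]

lemma neg_one_mul (x : R) : H.mul (H.neg H.one) x = H.neg x := by
  have h0 : H.zero ∈ H.hadd H.one (H.neg H.one) := H.neg_mem H.one
  have himg : H.mul x H.zero ∈ (fun y => H.mul x y) '' H.hadd H.one (H.neg H.one) :=
    ⟨H.zero, h0, rfl⟩
  rw [H.distrib, H.mul_zero', H.mul_one'] at himg
  have := H.neg_unique x (H.mul x (H.neg H.one)) himg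
  rw [← this, H.mul_comm]

/-- general associativity: sum of sums -/
lemma hadd4 {m u m' v x y z : R} (hx : x ∈ H.hadd m u) (hy : y ∈ H.hadd m' v)
    (hz : z ∈ H.hadd x y) : ∃ w ∈ H.hadd m m', ∃ t ∈ H.hadd u v, z ∈ H.hadd w t := by
  -- z ∈ ⋃_{x ∈ m+u} x + y = ⋃_{p ∈ u+y} m + p
  have h1 : z ∈ ⋃ p ∈ H.hadd u y, H.hadd m p := by
    rw [← H.hadd_assoc]
    exact Set.mem_iUnion₂.2 ⟨x, hx, hz⟩
  obtain ⟨p, hp, hzp⟩ := Set.mem_iUnion₂.1 h1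
  -- p ∈ u + y, y ∈ m' + v ⟹ p ∈ ⋃_{q ∈ u+m'} q + v
  have h2 : p ∈ ⋃ q ∈ H.hadd u m', H.hadd q v := by
    rw [H.hadd_assoc]
    exact Set.mem_iUnion₂.2 ⟨y, hy, hp⟩
  obtain ⟨q, hq, hpq⟩ := Set.mem_iUnion₂.1 h2
  -- z ∈ m + p, p ∈ q + v ⟹ z ∈ ⋃_{e ∈ m+q} e + v
  have h3 : z ∈ ⋃ e ∈ H.hadd m q, H.hadd e v := by
    rw [H.hadd_assoc]
    exact Set.mem_iUnion₂.2 ⟨p, hpq, hzp⟩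
  obtain ⟨e, he, hze⟩ := Set.mem_iUnion₂.1 h3
  -- e ∈ m + q, q ∈ m' + u ⟹ e ∈ ⋃_{w ∈ m+m'} w + u
  rw [H.hadd_comm u m'] at hq
  have h4 : e ∈ ⋃ w ∈ H.hadd m m', H.hadd w u := by
    rw [H.hadd_assoc]
    exact Set.mem_iUnion₂.2 ⟨q, hq, he⟩
  obtain ⟨w, hw, hew⟩ := Set.mem_iUnion₂.1 h4
  -- z ∈ e + v, e ∈ w + u ⟹ z ∈ ⋃_{t ∈ u+v} w + t
  have h5 : z ∈ ⋃ t ∈ H.hadd u v, H.hadd w t := by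
    rw [← H.hadd_assoc]
    exact Set.mem_iUnion₂.2 ⟨e, hew, hze⟩
  obtain ⟨t, ht, hzt⟩ := Set.mem_iUnion₂.1 h5
  exact ⟨w, hw, t, ht, hzt⟩

/-- multiplying a member of a hadd -/
lemma mul_mem_hadd {a b x : R} (r : R) (h : x ∈ H.hadd a b) :
    H.mul r x ∈ H.hadd (H.mul r a) (H.mul r b) := by
  rw [← H.distrib]; exact ⟨x, h, rfl⟩

/-- the extension M + Ra -/
def Mext (M : Set R) (a : R) : Set R :=
  {z | ∃ m ∈ M, ∃ r : R, z ∈ H.hadd m (H.mul r a)}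

lemma mem_Mext_self {M : Set R} (hM : H.IsHyperideal M) (a : R) {m : R} (hm : m ∈ M) :
    m ∈ H.Mext M a := by
  refine ⟨m, hm, H.zero, ?_⟩
  rw [H.zero_mul, H.hadd_zero']
  rfl

lemma self_mem_Mext {M : Set R} (hM : H.IsHyperideal M) (a : R) : a ∈ H.Mext M a := by
  refine ⟨H.zero, hM.1, H.one, ?_⟩
  rw [H.one_mul, H.zero_hadd]
  rfl

lemma Mext_hyperideal {M : Set R} (hM : H.IsHyperideal M) (a : R) :
    H.IsHyperideal (H.Mext M a) := by
  obtain ⟨h0, hsum, hneg, hmul⟩ := hM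
  refine ⟨⟨H.zero, h0, H.zero, ?_⟩, ?_, ?_, ?_⟩
  · rw [H.zero_mul, H.hadd_zero']; rfl
  · rintro x ⟨m, hm, r, hx⟩ y ⟨m', hm', s, hy⟩ z hz
    obtain ⟨w, hw, t, ht, hzt⟩ := H.hadd4 hx hy hz
    -- t ∈ (ra) + (sa) = a*(r+s)
    have : t ∈ (fun u => H.mul a u) '' H.hadd r s := by
      rw [H.distrib, H.mul_comm a r, H.mul_comm a s]
      exact ht
    obtain ⟨c, _, hc⟩ := this
    have hc' : H.mul a c = t := hc
    exact ⟨w, hsum _ hm _ hm' hw, c, by rw [H.mul_comm c a, hc']; exact hzt⟩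
  · rintro x ⟨m, hm, r, hx⟩
    have := H.mul_mem_hadd (H.neg H.one) hx
    rw [H.neg_one_mul m, ← H.mul_assoc] at this
    refine ⟨H.neg m, hneg _ hm, H.mul (H.neg H.one) r, ?_⟩
    rwa [← H.neg_one_mul x]
  · rintro s x ⟨m, hm, r, hx⟩
    have := H.mul_mem_hadd s hx
    rw [← H.mul_assoc] at this
    exact ⟨H.mul s m, hmul _ _ hm, H.mul s r, this⟩

lemma univ_not_prime {P : Set R} (hP : H.IsPrime P) : H.one ∉ P := by
  intro h1
  apply hP.2.1
  ext r
  simp only [Set.mem_univ, iff_true]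
  have := hP.1.2.2.2 r _ h1
  rwa [H.mul_one'] at this

/-- the key prime existence lemma -/
lemma exists_prime_disjoint (S : Set R) (hS1 : S.Nonempty)
    (hSm : ∀ a ∈ S, ∀ b ∈ S, H.mul a b ∈ S)
    (I0 : Set R) (hI0 : H.IsHyperideal I0) (hdisj : ∀ x ∈ I0, x ∉ S) :
    ∃ P : Set R, H.IsPrime P ∧ I0 ⊆ P ∧ ∀ x ∈ P, x ∉ S := by
  set F : Set (Set R) := {J | H.IsHyperideal J ∧ ∀ x ∈ J, x ∉ S} with hF
  have hchains : ∀ c ⊆ F, IsChain (· ⊆ ·) c → c.Nonempty →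
      ∃ ub ∈ F, ∀ s ∈ c, s ⊆ ub := by
    intro c hcF hchain hcne
    refine ⟨⋃₀ c, ⟨⟨?_, ?_, ?_, ?_⟩, ?_⟩, fun s hs => Set.subset_sUnion_of_mem hs⟩
    · obtain ⟨J, hJ⟩ := hcne
      exact ⟨J, hJ, (hcF hJ).1.1⟩
    · rintro x ⟨J1, hJ1, hx⟩ y ⟨J2, hJ2, hy⟩
      rcases hchain.total hJ1 hJ2 with h | h
      · exact fun z hz => ⟨J2, hJ2, (hcF hJ2).1.2.1 x (h hx) y hy hz⟩
      · exact fun z hz => ⟨J1, hJ1, (hcF hJ1).1.2.1 x hx y (h hy) hz⟩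
    · rintro x ⟨J, hJ, hx⟩
      exact ⟨J, hJ, (hcF hJ).1.2.2.1 x hx⟩
    · rintro r x ⟨J, hJ, hx⟩
      exact ⟨J, hJ, (hcF hJ).1.2.2.2 r x hx⟩
    · rintro x ⟨J, hJ, hx⟩
      exact (hcF hJ).2 x hx
  obtain ⟨M, hM0, hMF, hMmax⟩ := zorn_subset_nonempty F hchains I0 ⟨hI0, hdisj⟩
  · obtain ⟨hMideal, hMS⟩ := hMF
    refine ⟨M, ⟨hMideal, ?_, ?_⟩, hM0, hMS⟩
    · intro hu
      obtain ⟨s, hs⟩ := hS1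
      exact hMS s (hu ▸ Set.mem_univ s) hs
    · intro a b hab
      by_contra hcon
      push_neg at hcon
      obtain ⟨ha, hb⟩ := hcon
      -- M + Ra and M + Rb both meet S
      have hAmeets : ∃ s ∈ S, s ∈ H.Mext M a := by
        by_contra hno
        push_neg at hno
        have : H.Mext M a ∈ F := ⟨H.Mext_hyperideal hMideal a,
          fun x hx hxS => hno x hxS hx⟩
        have heq := hMmax this (fun m hm => H.mem_Mext_self hMideal a hm)
        exact ha (heq (H.self_mem_Mext hMideal a))
      have hBmeets : ∃ s ∈ S, s ∈ H.Mext M b := by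
        by_contra hno
        push_neg at hno
        have : H.Mext M b ∈ F := ⟨H.Mext_hyperideal hMideal b,
          fun x hx hxS => hno x hxS hx⟩
        have heq := hMmax this (fun m hm => H.mem_Mext_self hMideal b hm)
        exact hb (heq (H.self_mem_Mext hMideal b))
      obtain ⟨s, hsS, m, hm, r, hs⟩ := hAmeets
      obtain ⟨t, htS, m', hm', r', ht⟩ := hBmeets
      -- st ∈ M : st ∈ t*(m + ra) = tm + tra, tra ∈ (ra)*(m' + r'b) = ram' + rar'b ⊆ M
      have h1 : H.mul t s ∈ H.hadd (H.mul t m) (H.mul t (H.mul r a)) := H.mul_mem_hadd t hs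
      have h2 : H.mul (H.mul r a) t ∈
          H.hadd (H.mul (H.mul r a) m') (H.mul (H.mul r a) (H.mul r' b)) :=
        H.mul_mem_hadd (H.mul r a) ht
      obtain ⟨hz, hsum, _, hmulc⟩ := hMideal
      have hmem1 : H.mul (H.mul r a) m' ∈ M := hmulc _ _ hm'
      have hmem2 : H.mul (H.mul r a) (H.mul r' b) ∈ M := by
        have : H.mul (H.mul r a) (H.mul r' b) = H.mul (H.mul r r') (H.mul a b) := by
          rw [H.mul_assoc r a, ← H.mul_assoc a r', H.mul_comm a r', H.mul_assoc r' a,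
            ← H.mul_assoc r r']
        rw [this]
        exact hmulc _ _ hab
      have hta : H.mul t (H.mul r a) ∈ M := by
        have := hsum _ hmem1 _ hmem2 h2
        rwa [H.mul_comm] at this
      have htm : H.mul t m ∈ M := hmulc _ _ hm
      have hst : H.mul t s ∈ M := hsum _ htm _ hta h1
      have : H.mul s t ∈ S := hSm s hsS t htS
      rw [H.mul_comm] at this
      exact hMS _ hst this

lemma princ_hyperideal (f : R) : H.IsHyperideal {x | ∃ r, x = H.mul r f} := by
  refine ⟨⟨H.zero, (H.zero_mul f).symm⟩, ?_, ?_, ?_⟩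
  · rintro a ⟨r, rfl⟩ b ⟨s, rfl⟩ z hz
    rw [H.mul_comm r f, H.mul_comm s f] at hz
    have : z ∈ (fun u => H.mul f u) '' H.hadd r s := by rw [H.distrib]; exact hz
    obtain ⟨c, _, hc⟩ := this
    exact ⟨c, by rw [← hc, H.mul_comm]⟩
  · rintro a ⟨r, rfl⟩
    exact ⟨H.mul (H.neg H.one) r, by rw [← H.neg_one_mul (H.mul r f), ← H.mul_assoc]⟩
  · rintro s a ⟨r, rfl⟩
    exact ⟨H.mul s r, by rw [H.mul_assoc]⟩

lemma pow_one' (f : R) : H.pow f 1 = f := by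
  show H.mul f (H.pow f 0) = f
  show H.mul f H.one = f
  exact H.mul_one' f

lemma pow_mul_pow (f : R) (m n : ℕ) :
    H.mul (H.pow f m) (H.pow f n) = H.pow f (m + n) := by
  induction m with
  | zero => rw [Nat.zero_add]; exact H.one_mul _
  | succ k ih =>
    show H.mul (H.mul f (H.pow f k)) (H.pow f n) = H.pow f (k + 1 + n)
    rw [H.mul_assoc, ih, Nat.add_right_comm]
    rfl

lemma nil_mem_prime {f : R} (hf : f ∈ H.nil) {P : Set R} (hP : H.IsPrime P) :
    f ∈ P := by
  obtain ⟨n, hn⟩ := hf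
  have hz : H.pow f (n + 1) ∈ P := hn ▸ hP.1.1
  clear hn
  induction n with
  | zero => rwa [H.pow_one'] at hz
  | succ k ih =>
    rcases hP.2.2 f (H.pow f (k + 1)) hz with h | h
    · exact h
    · exact ih h

lemma mem_prime_of_mem {f : R} {P : Set R} (hP : H.IsPrime P) (hf : f ∈ P) (g : R) :
    H.mul f g ∈ P := by
  rw [H.mul_comm]
  exact hP.1.2.2.2 g f hf

lemma W_inter (f g : R) : H.W f ∩ H.W g = H.W (H.mul f g) := by
  ext P
  simp only [W, Set.mem_inter_iff, Set.mem_setOf_eq]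
  constructor
  · rintro ⟨hf, hg⟩ hfg
    rcases P.2.2.2 f g hfg with h | h
    · exact hf h
    · exact hg h
  · intro h
    exact ⟨fun hf => h (H.mem_prime_of_mem P.2 hf g),
      fun hg => h (by rw [H.mul_comm]; exact H.mem_prime_of_mem P.2 hg f)⟩

lemma W_eq_compl_V (f : R) : H.W f = (H.V {x | ∃ r, x = H.mul r f})ᶜ := by
  ext P
  simp only [W, V, Set.mem_compl_iff, Set.mem_setOf_eq]
  constructor
  · intro hf hsub
    exact hf (hsub ⟨H.one, (H.one_mul f).symm⟩)
  · intro h hf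
    exact h (by rintro x ⟨r, rfl⟩; exact P.2.1.2.2.2 r f hf)

lemma V_compl_eq_union {I : Set R} : (H.V I)ᶜ = ⋃ f ∈ I, H.W f := by
  ext P
  simp only [V, W, Set.mem_compl_iff, Set.mem_setOf_eq, Set.mem_iUnion]
  rw [Set.not_subset]
  exact ⟨fun ⟨f, hf, hnf⟩ => ⟨f, hf, hnf⟩, fun ⟨f, hf, hnf⟩ => ⟨f, hf, hnf⟩⟩

lemma zariski_eq : H.zariski =
    TopologicalSpace.generateFrom {U | ∃ f : R, U = H.W f} := by
  apply le_antisymm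
  · apply TopologicalSpace.generateFrom_anti
    rintro U ⟨f, rfl⟩
    exact ⟨{x | ∃ r, x = H.mul r f}, H.princ_hyperideal f, H.W_eq_compl_V f⟩
  · letI : TopologicalSpace H.Spectrum :=
      TopologicalSpace.generateFrom {U | ∃ f : R, U = H.W f}
    apply le_generateFrom
    rintro U ⟨I, hI, rfl⟩
    rw [H.V_compl_eq_union]
    exact isOpen_biUnion fun f _ =>
      TopologicalSpace.isOpen_generateFrom_of_mem ⟨f, rfl⟩

end KHR




/-- The sets `W(f) = {P : f ∉ P}` form a basis of the Zariski topology
on `Spec R`; `W(f) ∩ W(g) = W(fg)`; `W(f) = ∅` iff `f` is nilpotent; and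
`W(f) = Spec R` iff `f` is a unit. -/
theorem stmt12 {R : Type u} (H : KHR R) :
    @TopologicalSpace.IsTopologicalBasis H.Spectrum H.zariski
      {U | ∃ f : R, U = H.W f} ∧
    (∀ f g : R, H.W f ∩ H.W g = H.W (H.mul f g)) ∧
    (∀ f : R, H.W f = ∅ ↔ f ∈ H.nil) ∧
    (∀ f : R, H.W f = Set.univ ↔ H.IsUnit f) := by
  refine ⟨?_, H.W_inter, ?_, ?_⟩
  · -- basis
    letI := H.zariski
    refine ⟨?_, ?_, H.zariski_eq⟩
    · rintro t1 ⟨f, rfl⟩ t2 ⟨g, rfl⟩ x hx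
      exact ⟨H.W (H.mul f g), ⟨H.mul f g, rfl⟩, (H.W_inter f g) ▸ hx,
        le_of_eq (H.W_inter f g).symm⟩
    · apply Set.eq_univ_of_forall
      intro P
      exact ⟨H.W H.one, ⟨H.one, rfl⟩, H.univ_not_prime P.2⟩
  · -- nilpotent
    intro f
    constructor
    · intro hW
      by_contra hnil
      have hideal : H.IsHyperideal {H.zero} := by
        refine ⟨rfl, ?_, ?_, ?_⟩
        · intro a ha b hb
          rw [Set.mem_singleton_iff] at ha hb
          subst ha; subst hb
          rw [H.zero_hadd]
        · intro a ha
          rw [Set.mem_singleton_iff] at ha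
          subst ha
          have := H.neg_unique H.zero H.zero (by rw [H.zero_hadd]; rfl)
          rw [← this]; rfl
        · intro r a ha
          rw [Set.mem_singleton_iff] at ha
          subst ha
          rw [H.mul_zero']; rfl
      have hd : ∀ x ∈ ({H.zero} : Set R), x ∉ {x | ∃ n : ℕ, x = H.pow f n} := by
        rintro x hx ⟨n, hn⟩
        rw [Set.mem_singleton_iff] at hx
        subst hx
        apply hnil
        match n with
        | 0 =>
          refine ⟨0, ?_⟩
          show H.mul f (H.pow f 0) = H.zero
          show H.mul f H.one = H.zero
          have h1 : H.one = H.zero := hn.symm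
          rw [h1, H.mul_zero']
        | m + 1 => exact ⟨m, hn.symm⟩
      obtain ⟨P, hP, _, hPS⟩ := H.exists_prime_disjoint
        {x | ∃ n : ℕ, x = H.pow f n} ⟨H.one, 0, rfl⟩
        (by rintro a ⟨m, rfl⟩ b ⟨n, rfl⟩; exact ⟨m + n, (H.pow_mul_pow f m n)⟩)
        {H.zero} hideal hd
      have hf : f ∉ P := fun hf => hPS f hf ⟨1, (H.pow_one' f).symm⟩
      have : (⟨P, hP⟩ : H.Spectrum) ∈ H.W f := hf
      rw [hW] at this
      exact this
    · intro hnil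
      exact Set.eq_empty_iff_forall_notMem.2
        fun P hP => hP (H.nil_mem_prime hnil P.2)
  · -- units
    intro f
    constructor
    · intro hW
      by_contra hunit
      obtain ⟨P, hP, hsub, _⟩ := H.exists_prime_disjoint {H.one} ⟨H.one, rfl⟩
        (by rintro a ha b hb; rw [Set.mem_singleton_iff] at ha hb; subst ha; subst hb;
            rw [H.one_mul]; rfl)
        {x | ∃ r, x = H.mul r f} (H.princ_hyperideal f)
        (by rintro x ⟨r, rfl⟩ hx
            rw [Set.mem_singleton_iff] at hx
            exact hunit ⟨r, by rw [H.mul_comm]; exact hx⟩)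
      have hf : f ∈ P := hsub ⟨H.one, (H.one_mul f).symm⟩
      have : (⟨P, hP⟩ : H.Spectrum) ∈ H.W f := hW ▸ Set.mem_univ _
      exact this hf
    · rintro ⟨y, hy⟩
      apply Set.eq_univ_of_forall
      intro P hf
      exact H.univ_not_prime P.2 (hy ▸ H.mem_prime_of_mem P.2 hf y)
end

section
/- For a commutative Krasner hyperring R with unit, Spec(R) with the Zariski topology is a T₀-space, and a point P ∈ Spec(R) is closed if and only if P is a maximal hyperideal; moreover the closure of {P} is V(P). -/
universe u

namespace KHR

variable {R : Type u} {S : Type u} {T : Type u} {Q : Type u}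

lemma aux_mul_zero (H : KHR R) (a : R) : H.mul a H.zero = H.zero := by
  rw [H.mul_comm, H.zero_mul]

lemma aux_mul_one (H : KHR R) (a : R) : H.mul a H.one = a := by
  rw [H.mul_comm, H.one_mul]

lemma aux_one_mem (H : KHR R) {I : Set R} (hI : H.IsHyperideal I) (h1 : H.one ∈ I) :
    I = Set.univ := by
  ext r
  simp only [Set.mem_univ, iff_true]
  have := hI.2.2.2 r _ h1
  rwa [aux_mul_one] at this

lemma aux_mul_neg (H : KHR R) (a x : R) : H.mul a (H.neg x) = H.neg (H.mul a x) := by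
  apply H.neg_unique
  have h0 : H.mul a H.zero ∈ (fun y => H.mul a y) '' H.hadd x (H.neg x) :=
    ⟨H.zero, H.neg_mem x, rfl⟩
  rw [H.distrib, aux_mul_zero] at h0
  exact h0

/-- Every maximal hyperideal is prime (via the colon ideal trick). -/
lemma aux_maximal_isPrime (H : KHR R) {M : Set R} (hM : H.IsMaximal M) : H.IsPrime M := by
  obtain ⟨hI, hne, hmax⟩ := hM
  refine ⟨hI, hne, fun a b hab => ?_⟩
  by_cases hb : b ∈ M
  · exact Or.inr hb
  · left
    set J : Set R := {x | H.mul a x ∈ M} with hJdef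
    have hJ : H.IsHyperideal J := by
      refine ⟨?_, ?_, ?_, ?_⟩
      · show H.mul a H.zero ∈ M; rw [aux_mul_zero]; exact hI.1
      · intro x hx y hy c hc
        have : H.mul a c ∈ (fun z => H.mul a z) '' H.hadd x y := ⟨c, hc, rfl⟩
        rw [H.distrib] at this
        exact hI.2.1 _ hx _ hy this
      · intro x hx
        show H.mul a (H.neg x) ∈ M
        rw [aux_mul_neg]
        exact hI.2.2.1 _ hx
      · intro r x hx
        show H.mul a (H.mul r x) ∈ M
        have : H.mul a (H.mul r x) = H.mul r (H.mul a x) := by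
          rw [← H.mul_assoc, H.mul_comm a r, H.mul_assoc]
        rw [this]
        exact hI.2.2.2 _ _ hx
    have hMJ : M ⊆ J := fun m hm => hI.2.2.2 a _ hm
    have hbJ : b ∈ J := hab
    have hssub : M ⊂ J := ⟨hMJ, fun h => hb (h hbJ)⟩
    have hU := hmax J hJ hssub
    have h1 : H.one ∈ J := by rw [hU]; trivial
    have : H.mul a H.one ∈ M := h1
    rwa [aux_mul_one] at this

/-- Every proper hyperideal is contained in a maximal one (Zorn). -/
lemma aux_exists_maximal (H : KHR R) {J : Set R} (hJ : H.IsHyperideal J)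
    (hne : J ≠ Set.univ) : ∃ M, H.IsMaximal M ∧ J ⊆ M := by
  set S : Set (Set R) := {I | H.IsHyperideal I ∧ H.one ∉ I} with hS
  have hJS : J ∈ S := ⟨hJ, fun h => hne (aux_one_mem H hJ h)⟩
  have hchain : ∀ c ⊆ S, IsChain (· ⊆ ·) c → c.Nonempty →
      ∃ ub ∈ S, ∀ s ∈ c, s ⊆ ub := by
    intro c hcS hc ⟨I0, hI0⟩
    refine ⟨⋃₀ c, ⟨⟨?_, ?_, ?_, ?_⟩, ?_⟩, fun s hs => Set.subset_sUnion_of_mem hs⟩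
    · exact ⟨I0, hI0, (hcS hI0).1.1⟩
    · rintro x ⟨I1, hI1, hx⟩ y ⟨I2, hI2, hy⟩
      rcases hc.total hI1 hI2 with h | h
      · exact fun z hz => ⟨I2, hI2, (hcS hI2).1.2.1 x (h hx) y hy hz⟩
      · exact fun z hz => ⟨I1, hI1, (hcS hI1).1.2.1 x hx y (h hy) hz⟩
    · rintro x ⟨I1, hI1, hx⟩
      exact ⟨I1, hI1, (hcS hI1).1.2.2.1 x hx⟩
    · rintro r x ⟨I1, hI1, hx⟩
      exact ⟨I1, hI1, (hcS hI1).1.2.2.2 r x hx⟩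
    · rintro ⟨I1, hI1, hx⟩
      exact (hcS hI1).2 hx
  obtain ⟨M, hJM, hMmax⟩ := zorn_subset_nonempty S hchain J hJS
  have hMS : M ∈ S := hMmax.prop
  refine ⟨M, ⟨hMS.1, fun h => hMS.2 (h ▸ trivial), ?_⟩, hJM⟩
  intro K hK hMK
  by_contra hKne
  have hKS : K ∈ S := ⟨hK, fun h => hKne (aux_one_mem H hK h)⟩
  have : K ⊆ M := hMmax.2 hKS hMK.1
  exact hMK.2 this

lemma aux_isClosed_V (H : KHR R) {I : Set R} (hI : H.IsHyperideal I) :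
    @IsClosed H.Spectrum H.zariski (H.V I) := by
  letI := H.zariski
  rw [← isOpen_compl_iff]
  exact TopologicalSpace.isOpen_generateFrom_of_mem ⟨I, hI, rfl⟩

lemma aux_closure_singleton (H : KHR R) (P : H.Spectrum) :
    @closure H.Spectrum H.zariski {P} = H.V P.1 := by
  letI := H.zariski
  apply Set.Subset.antisymm
  · exact closure_minimal (fun x hx => hx ▸ Set.Subset.refl _) (aux_isClosed_V H P.2.1)
  · intro Q hQ
    rw [mem_closure_iff]
    intro o ho hQo
    refine ⟨P, ?_, rfl⟩
    have ho' : TopologicalSpace.GenerateOpen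
        {U | ∃ I : Set R, H.IsHyperideal I ∧ U = (H.V I)ᶜ} o := ho
    clear ho
    induction ho' with
    | basic u hu =>
      obtain ⟨I, hI, rfl⟩ := hu
      intro hPI
      exact hQo fun x hx => hQ (hPI hx)
    | univ => trivial
    | inter u v _ _ ihu ihv => exact ⟨ihu hQo.1, ihv hQo.2⟩
    | sUnion s _ ih =>
      obtain ⟨u, hu, hQu⟩ := hQo
      exact ⟨u, hu, ih u hu hQu⟩

end KHR

/-- `Spec R` with the Zariski topology is a `T₀`-space; a point `P` is
closed iff `P` is a maximal hyperideal; and the closure of `{P}` is `V(P)`. -/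
theorem stmt15 {R : Type u} (H : KHR R) :
    @T0Space H.Spectrum H.zariski ∧
    (∀ P : H.Spectrum, (@IsClosed H.Spectrum H.zariski {P} ↔ H.IsMaximal P.1)) ∧
    (∀ P : H.Spectrum, @closure H.Spectrum H.zariski {P} = H.V P.1) := by
  letI := H.zariski
  have hcl : ∀ P : H.Spectrum, closure {P} = H.V P.1 := KHR.aux_closure_singleton H
  refine ⟨?_, ?_, hcl⟩
  · refine ⟨fun {P Q} h => ?_⟩
    have h' := inseparable_iff_closure_eq.1 h
    rw [hcl, hcl] at h'
    have h1 : P.1 ⊆ Q.1 := by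
      have : Q ∈ H.V Q.1 := Set.Subset.refl _
      rw [← h'] at this; exact this
    have h2 : Q.1 ⊆ P.1 := by
      have : P ∈ H.V P.1 := Set.Subset.refl _
      rw [h'] at this; exact this
    exact Subtype.ext (Set.Subset.antisymm h1 h2)
  · intro P
    constructor
    · intro hP
      have hVP : H.V P.1 = {P} := by rw [← hcl]; exact hP.closure_eq
      refine ⟨P.2.1, P.2.2.1, fun J hJ hPJ => ?_⟩
      by_contra hJne
      obtain ⟨M, hM, hJM⟩ := KHR.aux_exists_maximal H hJ hJne
      have hMP : (⟨M, KHR.aux_maximal_isPrime H hM⟩ : H.Spectrum) ∈ H.V P.1 :=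
        fun x hx => hJM (hPJ.1 hx)
      rw [hVP] at hMP
      have : M = P.1 := congrArg Subtype.val hMP
      exact hPJ.2 (this ▸ hJM)
    · intro hP
      have hVP : H.V P.1 = {P} := by
        apply Set.Subset.antisymm
        · intro Q hQ
          by_contra hne
          have hss : P.1 ⊂ Q.1 := ⟨hQ, fun h => hne
            (Set.mem_singleton_iff.2 (Subtype.ext (Set.Subset.antisymm h hQ)))⟩
          exact Q.2.2.1 (hP.2.2 Q.1 Q.2.1 hss)
        · intro Q hQ
          rw [Set.mem_singleton_iff] at hQ
          rw [hQ]; exact Set.Subset.refl _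
      rw [← hVP]
      exact KHR.aux_isClosed_V H P.2.1
end
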